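/- arXiv:2403.12763 — 7 statements merged into one kernel-verified Lean document; each statement's English description precedes it below -/
import Mathlib

section
/- Let α > 1 be a real number. For every T > 0 there exists a constant C_T > 0 such that for every finitely supported family (a_n)_{n∈ℤ} of complex numbers and every x ∈ ℝ, ∫_0^T | Σ_{n∈ℤ} a_n e^{i(t|n|^α + n x)} |² dt ≤ C_T Σ_{n∈ℤ} |a_n|². The constant C_T does not depend on x or on (a_n). -/
open MeasureTheory Real

noncomputable section

namespace StrichartzAux

lemma card4 (a b c d : ℤ) : ({a, b, c, d} : Finset ℤ).card ≤ 4 := by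
  have h1 := Finset.card_insert_le a ({b, c, d} : Finset ℤ)
  have h2 := Finset.card_insert_le b ({c, d} : Finset ℤ)
  have h3 := Finset.card_insert_le c ({d} : Finset ℤ)
  simp only [Finset.card_singleton] at h3
  omega

lemma superadd {p : ℝ} (hp : 1 ≤ p) {x y : ℝ} (hx : 0 ≤ x) (hy : 0 ≤ y) :
    x ^ p + y ^ p ≤ (x + y) ^ p := by
  lift x to NNReal using hx
  lift y to NNReal using hy
  exact_mod_cast NNReal.add_rpow_le_rpow_add x y hp

/-- separation of frequencies -/
lemma sep_nat {α : ℝ} (hα : 1 ≤ α) {a b : ℕ} (h : a < b) :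
    ((b : ℝ) - a) ^ α ≤ (b : ℝ) ^ α - (a : ℝ) ^ α := by
  have hA : (0:ℝ) ≤ a := Nat.cast_nonneg _
  have hab : (a : ℝ) < b := by exact_mod_cast h
  have h1 : (a:ℝ) ^ α + ((b:ℝ) - a) ^ α ≤ (b:ℝ) ^ α := by
    have := superadd hα hA (by linarith : (0:ℝ) ≤ (b:ℝ) - a)
    simpa using this
  have h2 : (0:ℝ) ≤ (a:ℝ) ^ α := Real.rpow_nonneg hA α
  linarith

lemma sep {α : ℝ} (hα : 1 ≤ α) {n m : ℤ} (h : n.natAbs ≠ m.natAbs) :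
    ((((n.natAbs : ℤ) - m.natAbs).natAbs : ℝ)) ^ α ≤ |(|(n : ℝ)| ^ α - |(m : ℝ)| ^ α)| := by
  have hn : |(n : ℝ)| = (n.natAbs : ℝ) := by
    rw [Nat.cast_natAbs]; push_cast [abs_abs]; rfl
  have hm : |(m : ℝ)| = (m.natAbs : ℝ) := by
    rw [Nat.cast_natAbs]; push_cast [abs_abs]; rfl
  rw [hn, hm]
  rcases lt_or_gt_of_ne h with hlt | hlt
  · have hk : ((((n.natAbs : ℤ) - m.natAbs).natAbs : ℝ)) = (m.natAbs : ℝ) - n.natAbs := by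
      have : ((n.natAbs : ℤ) - m.natAbs).natAbs = m.natAbs - n.natAbs := by omega
      rw [this, Nat.cast_sub hlt.le]
    rw [hk]
    have := sep_nat hα hlt
    have h2 : ((n.natAbs:ℝ)) ^ α ≤ (m.natAbs:ℝ) ^ α := by
      apply Real.rpow_le_rpow (Nat.cast_nonneg _) (by exact_mod_cast hlt.le) (by linarith)
    rw [abs_sub_comm, abs_of_nonneg (by linarith)]
    exact this
  · have hk : ((((n.natAbs : ℤ) - m.natAbs).natAbs : ℝ)) = (n.natAbs : ℝ) - m.natAbs := by
      have : ((n.natAbs : ℤ) - m.natAbs).natAbs = n.natAbs - m.natAbs := by omega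
      rw [this]; rw [Nat.cast_sub hlt.le]
    rw [hk]
    have := sep_nat hα hlt
    have h2 : ((m.natAbs:ℝ)) ^ α ≤ (n.natAbs:ℝ) ^ α := by
      apply Real.rpow_le_rpow (Nat.cast_nonneg _) (by exact_mod_cast hlt.le) (by linarith)
    rw [abs_of_nonneg (by linarith)]
    exact this

lemma fiber_sum {α : ℝ} (hα : 1 < α) (p : ℤ) (t : Finset ℤ) :
    ∑ q ∈ t, ((((p.natAbs : ℤ) - q.natAbs).natAbs : ℝ) ^ α)⁻¹
      ≤ 4 * ∑' k : ℕ, ((k : ℝ) ^ α)⁻¹ := by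
  classical
  set g : ℕ → ℝ := fun k => ((k : ℝ) ^ α)⁻¹ with hg
  have hg0 : ∀ k, 0 ≤ g k := fun k => by positivity
  have hsum : Summable g := Real.summable_nat_rpow_inv.mpr hα
  set F : ℤ → ℕ := fun q => ((p.natAbs : ℤ) - q.natAbs).natAbs with hF
  have hcomp := Finset.sum_comp (s := t) g F
  have hcard : ∀ k, (t.filter fun q => F q = k).card ≤ 4 := by
    intro k
    set A : ℤ := (p.natAbs : ℤ)
    have hsub : (t.filter fun q => F q = k) ⊆ ({A - k, -(A - k), A + k, -(A + k)} : Finset ℤ) := by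
      intro q hq
      rw [Finset.mem_filter] at hq
      have hq2 : ((A - (q.natAbs : ℤ)).natAbs : ℤ) = (k : ℤ) := by
        simp only [hF] at hq; exact_mod_cast hq.2
      have habs : A - (q.natAbs : ℤ) = k ∨ A - (q.natAbs : ℤ) = -k := by
        rcases Int.natAbs_eq (A - (q.natAbs : ℤ)) with h | h <;> omega
      have hq3 : (q.natAbs : ℤ) = A - k ∨ (q.natAbs : ℤ) = A + k := by omega
      have hq4 : q = (q.natAbs : ℤ) ∨ q = -(q.natAbs : ℤ) := Int.natAbs_eq q
      simp only [Finset.mem_insert, Finset.mem_singleton]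
      rcases hq3 with h3 | h3 <;> rcases hq4 with h4 | h4 <;> omega
    exact (Finset.card_le_card hsub).trans (card4 _ _ _ _)
  rw [show (fun q => ((((p.natAbs : ℤ) - q.natAbs).natAbs : ℝ) ^ α)⁻¹) = fun q => g (F q) from rfl]
  rw [hcomp]
  calc ∑ k ∈ t.image F, (t.filter fun q => F q = k).card • g k
      ≤ ∑ k ∈ t.image F, 4 * g k := by
        refine Finset.sum_le_sum fun k _ => ?_
        rw [nsmul_eq_mul]
        exact mul_le_mul_of_nonneg_right (by exact_mod_cast hcard k) (hg0 k)
    _ = 4 * ∑ k ∈ t.image F, g k := by rw [Finset.mul_sum]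
    _ ≤ 4 * ∑' k : ℕ, g k := by
        have := Summable.sum_le_tsum (t.image F) (fun k _ => hg0 k) hsum
        linarith

/-- row sum bound -/
lemma row_sum {α T : ℝ} (hα : 1 < α) (hT : 0 < T) (s : Finset ℤ) (p : ℤ) (f : ℤ → ℝ)
    (hfT : ∀ q, f q ≤ T)
    (hfd : ∀ q, q.natAbs ≠ p.natAbs →
      f q ≤ 2 * ((((p.natAbs : ℤ) - q.natAbs).natAbs : ℝ) ^ α)⁻¹) :
    ∑ q ∈ s, f q ≤ 2 * T + 8 * ∑' k : ℕ, ((k : ℝ) ^ α)⁻¹ := by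
  classical
  have hsplit := Finset.sum_filter_add_sum_filter_not s (fun q => q.natAbs = p.natAbs) f
  rw [← hsplit]
  have h1 : ∑ q ∈ s.filter (fun q => q.natAbs = p.natAbs), f q ≤ 2 * T := by
    have hsub : s.filter (fun q => q.natAbs = p.natAbs) ⊆
        ({(p.natAbs : ℤ), -(p.natAbs : ℤ)} : Finset ℤ) := by
      intro q hq
      rw [Finset.mem_filter] at hq
      have h4 : q = (q.natAbs : ℤ) ∨ q = -(q.natAbs : ℤ) := Int.natAbs_eq q
      have : (q.natAbs : ℤ) = (p.natAbs : ℤ) := by exact_mod_cast hq.2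
      simp only [Finset.mem_insert, Finset.mem_singleton]
      omega
    have hcard : (s.filter (fun q => q.natAbs = p.natAbs)).card ≤ 2 := by
      refine (Finset.card_le_card hsub).trans ?_
      exact (Finset.card_insert_le _ _).trans (by simp)
    calc ∑ q ∈ s.filter (fun q => q.natAbs = p.natAbs), f q
        ≤ (s.filter (fun q => q.natAbs = p.natAbs)).card • T :=
          Finset.sum_le_card_nsmul _ _ _ (fun q _ => hfT q)
      _ ≤ 2 * T := by
          rw [nsmul_eq_mul]
          exact mul_le_mul_of_nonneg_right (by exact_mod_cast hcard) hT.le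
  have h2 : ∑ q ∈ s.filter (fun q => ¬ q.natAbs = p.natAbs), f q
      ≤ 8 * ∑' k : ℕ, ((k : ℝ) ^ α)⁻¹ := by
    calc ∑ q ∈ s.filter (fun q => ¬ q.natAbs = p.natAbs), f q
        ≤ ∑ q ∈ s.filter (fun q => ¬ q.natAbs = p.natAbs),
            2 * ((((p.natAbs : ℤ) - q.natAbs).natAbs : ℝ) ^ α)⁻¹ := by
          refine Finset.sum_le_sum fun q hq => ?_
          rw [Finset.mem_filter] at hq
          exact hfd q hq.2
      _ = 2 * ∑ q ∈ s.filter (fun q => ¬ q.natAbs = p.natAbs),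
            ((((p.natAbs : ℤ) - q.natAbs).natAbs : ℝ) ^ α)⁻¹ := by rw [Finset.mul_sum]
      _ ≤ 2 * (4 * ∑' k : ℕ, ((k : ℝ) ^ α)⁻¹) := by
          have := fiber_sum hα p (s.filter (fun q => ¬ q.natAbs = p.natAbs))
          linarith
      _ = 8 * ∑' k : ℕ, ((k : ℝ) ^ α)⁻¹ := by ring
  linarith

lemma norm_exp_I_real (r : ℝ) : ‖Complex.exp (Complex.I * (r : ℂ))‖ = 1 := by
  rw [Complex.norm_exp]
  simp

lemma G_le_T {T : ℝ} (hT : 0 < T) (θ : ℝ) :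
    ‖∫ t in Set.Ioc (0:ℝ) T, Complex.exp (Complex.I * ((t * θ : ℝ) : ℂ))‖ ≤ T := by
  rw [← intervalIntegral.integral_of_le hT.le]
  have := intervalIntegral.norm_integral_le_of_norm_le_const (a := 0) (b := T) (C := 1)
    (f := fun t => Complex.exp (Complex.I * ((t * θ : ℝ) : ℂ)))
    (fun x _ => le_of_eq (norm_exp_I_real _))
  simpa [abs_of_pos hT] using this

lemma G_le_inv {T : ℝ} (hT : 0 < T) {θ : ℝ} (hθ : θ ≠ 0) :
    ‖∫ t in Set.Ioc (0:ℝ) T, Complex.exp (Complex.I * ((t * θ : ℝ) : ℂ))‖ ≤ 2 / |θ| := by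
  have hrw : ∀ t : ℝ, Complex.exp (Complex.I * ((t * θ : ℝ) : ℂ))
      = Complex.exp ((Complex.I * (θ:ℂ)) * (t : ℂ)) := by
    intro t; congr 1; push_cast; ring
  rw [← intervalIntegral.integral_of_le hT.le]
  simp_rw [hrw]
  have hc : (Complex.I * (θ:ℂ)) ≠ 0 :=
    mul_ne_zero Complex.I_ne_zero (by exact_mod_cast hθ)
  rw [integral_exp_mul_complex hc, norm_div]
  have e1 : ‖Complex.exp (Complex.I * (θ:ℂ) * ((T:ℝ) : ℂ))‖ = 1 := by
    rw [show Complex.I * (θ:ℂ) * ((T:ℝ):ℂ) = Complex.I * ((θ * T : ℝ):ℂ) by push_cast; ring]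
    exact norm_exp_I_real _
  have e2 : ‖Complex.exp (Complex.I * (θ:ℂ) * (((0:ℝ)) : ℂ))‖ = 1 := by
    rw [show Complex.I * (θ:ℂ) * (((0:ℝ)):ℂ) = Complex.I * ((θ * 0 : ℝ):ℂ) by push_cast; ring]
    exact norm_exp_I_real _
  have h1 : ‖Complex.exp (Complex.I * (θ:ℂ) * ((T:ℝ):ℂ))
      - Complex.exp (Complex.I * (θ:ℂ) * (((0:ℝ)):ℂ))‖ ≤ 2 := by
    refine (norm_sub_le _ _).trans ?_
    rw [e1, e2]; norm_num
  have h2 : ‖Complex.I * (θ:ℂ)‖ = |θ| := by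
    rw [norm_mul, Complex.norm_I, one_mul,
      Complex.norm_real, Real.norm_eq_abs]
  rw [h2]
  have hpos : (0:ℝ) < |θ| := abs_pos.mpr hθ
  gcongr

lemma G_bound {α T : ℝ} (hα : 1 < α) (hT : 0 < T) {n m : ℤ} (h : n.natAbs ≠ m.natAbs) :
    ‖∫ t in Set.Ioc (0:ℝ) T,
        Complex.exp (Complex.I * ((t * (|(n:ℝ)| ^ α - |(m:ℝ)| ^ α) : ℝ) : ℂ))‖
      ≤ 2 * ((((n.natAbs : ℤ) - m.natAbs).natAbs : ℝ) ^ α)⁻¹ := by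
  have hk1 : (1:ℝ) ≤ (((n.natAbs : ℤ) - m.natAbs).natAbs : ℝ) := by
    have hne : ((n.natAbs : ℤ) - m.natAbs).natAbs ≠ 0 := by omega
    exact_mod_cast Nat.one_le_iff_ne_zero.mpr hne
  have hsep := sep hα.le h
  have hkpos : (0:ℝ) < (((n.natAbs:ℤ) - m.natAbs).natAbs : ℝ) ^ α :=
    Real.rpow_pos_of_pos (by linarith) α
  have hθ : |(n:ℝ)| ^ α - |(m:ℝ)| ^ α ≠ 0 := by
    intro hc; rw [hc] at hsep; simp only [abs_zero] at hsep; linarith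
  refine (G_le_inv hT hθ).trans ?_
  rw [div_eq_mul_inv]
  exact mul_le_mul_of_nonneg_left (inv_anti₀ hkpos hsep) (by norm_num)

lemma mul_conj_exp (p q : ℝ) :
    Complex.exp (Complex.I * (p:ℂ)) * (starRingEnd ℂ) (Complex.exp (Complex.I * (q:ℂ)))
      = Complex.exp (Complex.I * ((p - q : ℝ):ℂ)) := by
  rw [← Complex.exp_conj, ← Complex.exp_add]
  congr 1
  rw [map_mul, Complex.conj_I, Complex.conj_ofReal]
  push_cast
  ring

lemma key_integral {T : ℝ} (c θ : ℝ) (z : ℂ) :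
    ∫ t in Set.Ioc (0:ℝ) T, z * Complex.exp (Complex.I * ((t * θ + c : ℝ) : ℂ))
      = (z * Complex.exp (Complex.I * (c:ℂ))) *
        ∫ t in Set.Ioc (0:ℝ) T, Complex.exp (Complex.I * ((t * θ : ℝ) : ℂ)) := by
  have hpt : ∀ t : ℝ, z * Complex.exp (Complex.I * ((t * θ + c : ℝ) : ℂ))
      = (z * Complex.exp (Complex.I * (c:ℂ))) * Complex.exp (Complex.I * ((t * θ : ℝ):ℂ)) := by
    intro t
    rw [mul_assoc, ← Complex.exp_add]
    congr 2
    push_cast; ring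
  simp_rw [hpt]
  exact MeasureTheory.integral_const_mul _ _

end StrichartzAux

/-- The `L^∞_x L²_t` Strichartz-type estimate for the fractional Schrödinger
group `e^{it|D_x|^α}` on the circle: the `L²` norm in time of the solution at
each fixed point `x` is bounded by the `L²` norm of the datum. -/
theorem strichartz_LinftyL2
    (α : ℝ) (hα : 1 < α) (T : ℝ) (hT : 0 < T) :
    ∃ C : ℝ, 0 < C ∧
      ∀ a : ℤ → ℂ, (Function.support a).Finite →
      ∀ x : ℝ,
        (∫ t in Set.Ioc (0:ℝ) T,
            ‖∑ᶠ n : ℤ, a n * Complex.exp (Complex.I * ((t * |(n:ℝ)| ^ α + n * x : ℝ) : ℂ))‖ ^ 2)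
          ≤ C * ∑ᶠ n : ℤ, ‖a n‖ ^ 2 := by
  classical
  have hZ0 : 0 ≤ ∑' k : ℕ, ((k : ℝ) ^ α)⁻¹ := tsum_nonneg fun k => by positivity
  refine ⟨2 * T + 8 * ∑' k : ℕ, ((k : ℝ) ^ α)⁻¹, by linarith, ?_⟩
  intro a ha x
  set Z : ℝ := ∑' k : ℕ, ((k : ℝ) ^ α)⁻¹ with hZdef
  set s : Finset ℤ := ha.toFinset with hs
  set w : ℤ → ℝ := fun n => |(n:ℝ)| ^ α with hw
  set E : ℤ → ℝ → ℂ := fun n t => Complex.exp (Complex.I * ((t * w n + n * x : ℝ) : ℂ)) with hE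
  set S : ℝ := ∑ n ∈ s, ‖a n‖ ^ 2 with hSdef
  have hS0 : 0 ≤ S := Finset.sum_nonneg fun n _ => by positivity
  have hEc : ∀ n, Continuous (fun t => E n t) := by
    intro n
    simp only [hE]
    exact Complex.continuous_exp.comp (continuous_const.mul
      (Complex.continuous_ofReal.comp (by continuity)))
  -- finsum reduction
  have h2 : (∑ᶠ n : ℤ, ‖a n‖ ^ 2) = S := by
    apply finsum_eq_sum_of_support_subset
    intro n hn
    simp only [Function.mem_support, ne_eq] at hn
    have han : a n ≠ 0 := fun hc => hn (by simp [hc])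
    simpa [hs, Set.Finite.coe_toFinset] using han
  have h1 : ∀ t : ℝ,
      (∑ᶠ n : ℤ, a n * Complex.exp (Complex.I * ((t * |(n:ℝ)| ^ α + n * x : ℝ) : ℂ)))
        = ∑ n ∈ s, a n * E n t := by
    intro t
    apply finsum_eq_sum_of_support_subset
    intro n hn
    simp only [Function.mem_support, ne_eq] at hn
    have han : a n ≠ 0 := fun hc => hn (by simp [hc])
    simpa [hs, Set.Finite.coe_toFinset] using han
  rw [h2]
  -- the oscillatory kernel
  set B : ℤ × ℤ → ℝ := fun p =>
    ‖∫ t in Set.Ioc (0:ℝ) T, Complex.exp (Complex.I * ((t * (w p.1 - w p.2) : ℝ) : ℂ))‖ with hB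
  have hB0 : ∀ p, 0 ≤ B p := fun p => norm_nonneg _
  have hBT : ∀ p : ℤ × ℤ, B p ≤ T := fun p => StrichartzAux.G_le_T hT _
  have hBd : ∀ n m : ℤ, n.natAbs ≠ m.natAbs →
      B (n, m) ≤ 2 * ((((n.natAbs : ℤ) - m.natAbs).natAbs : ℝ) ^ α)⁻¹ := by
    intro n m h
    simp only [hB, hw]
    exact StrichartzAux.G_bound hα hT h
  -- pointwise expansion
  have hpair : ∀ (n m : ℤ) (t : ℝ), (a n * E n t) * (starRingEnd ℂ) (a m * E m t)
      = (a n * (starRingEnd ℂ) (a m) *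
          Complex.exp (Complex.I * ((((n : ℝ) - (m : ℝ)) * x : ℝ) : ℂ)))
        * Complex.exp (Complex.I * ((t * (w n - w m) : ℝ) : ℂ)) := by
    intro n m t
    simp only [hE, map_mul]
    have hconj := StrichartzAux.mul_conj_exp (t * w n + (n : ℝ) * x) (t * w m + (m : ℝ) * x)
    have hsplit : Complex.exp
          (Complex.I * ((t * w n + (n:ℝ) * x - (t * w m + (m:ℝ) * x) : ℝ) : ℂ))
        = Complex.exp (Complex.I * ((((n : ℝ) - (m : ℝ)) * x : ℝ) : ℂ))
          * Complex.exp (Complex.I * ((t * (w n - w m) : ℝ) : ℂ)) := by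
      rw [← Complex.exp_add]; congr 1; push_cast; ring
    calc a n * Complex.exp (Complex.I * ((t * w n + (n:ℝ) * x : ℝ) : ℂ)) *
          ((starRingEnd ℂ) (a m) *
            (starRingEnd ℂ) (Complex.exp (Complex.I * ((t * w m + (m:ℝ) * x : ℝ) : ℂ))))
        = (a n * (starRingEnd ℂ) (a m)) *
            (Complex.exp (Complex.I * ((t * w n + (n:ℝ) * x : ℝ) : ℂ)) *
              (starRingEnd ℂ) (Complex.exp (Complex.I * ((t * w m + (m:ℝ) * x : ℝ) : ℂ)))) := by
          ring
      _ = (a n * (starRingEnd ℂ) (a m)) * Complex.exp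
            (Complex.I * ((t * w n + (n:ℝ) * x - (t * w m + (m:ℝ) * x) : ℝ) : ℂ)) := by
          rw [hconj]
      _ = _ := by rw [hsplit]; ring
  have hprod : ∀ t : ℝ,
      (∑ n ∈ s, a n * E n t) * (starRingEnd ℂ) (∑ n ∈ s, a n * E n t)
        = ∑ p ∈ s ×ˢ s, (a p.1 * (starRingEnd ℂ) (a p.2) *
            Complex.exp (Complex.I * ((((p.1 : ℝ) - (p.2 : ℝ)) * x : ℝ) : ℂ)))
          * Complex.exp (Complex.I * ((t * (w p.1 - w p.2) : ℝ) : ℂ)) := by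
    intro t
    rw [map_sum, Finset.sum_mul_sum, Finset.sum_product]
    exact Finset.sum_congr rfl fun n _ => Finset.sum_congr rfl fun m _ => hpair n m t
  have hexpc : ∀ θ : ℝ, Continuous fun t : ℝ => Complex.exp (Complex.I * ((t * θ : ℝ) : ℂ)) :=
    fun θ => Complex.continuous_exp.comp (continuous_const.mul
      (Complex.continuous_ofReal.comp (by continuity)))
  have hFc : Continuous (fun t => ∑ n ∈ s, a n * E n t) :=
    continuous_finset_sum _ fun n _ => continuous_const.mul (hEc n)
  have hFint : IntegrableOn
      (fun t => (∑ n ∈ s, a n * E n t) * (starRingEnd ℂ) (∑ n ∈ s, a n * E n t))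
      (Set.Ioc 0 T) volume :=
    Continuous.integrableOn_Ioc (hFc.mul hFc.star)
  have hnormsq : ∀ z : ℂ, ‖z‖ ^ 2 = (z * (starRingEnd ℂ) z).re := by
    intro z
    rw [Complex.mul_conj, Complex.ofReal_re, Complex.normSq_eq_norm_sq]
  have bound1 : ∑ p ∈ s ×ˢ s, ‖a p.1‖ ^ 2 * B p ≤ (2 * T + 8 * Z) * S := by
    rw [Finset.sum_product]
    calc ∑ n ∈ s, ∑ m ∈ s, ‖a n‖ ^ 2 * B (n, m)
        = ∑ n ∈ s, ‖a n‖ ^ 2 * ∑ m ∈ s, B (n, m) := by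
          exact Finset.sum_congr rfl fun n _ => (Finset.mul_sum _ _ _).symm
      _ ≤ ∑ n ∈ s, ‖a n‖ ^ 2 * (2 * T + 8 * Z) := by
          refine Finset.sum_le_sum fun n _ => mul_le_mul_of_nonneg_left ?_ (by positivity)
          refine StrichartzAux.row_sum hα hT s n (fun m => B (n, m))
            (fun m => hBT _) (fun m hm => hBd n m (Ne.symm hm))
      _ = (2 * T + 8 * Z) * S := by rw [← Finset.sum_mul, mul_comm]
  have bound2 : ∑ p ∈ s ×ˢ s, ‖a p.2‖ ^ 2 * B p ≤ (2 * T + 8 * Z) * S := by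
    rw [Finset.sum_product, Finset.sum_comm]
    calc ∑ m ∈ s, ∑ n ∈ s, ‖a m‖ ^ 2 * B (n, m)
        = ∑ m ∈ s, ‖a m‖ ^ 2 * ∑ n ∈ s, B (n, m) := by
          exact Finset.sum_congr rfl fun m _ => (Finset.mul_sum _ _ _).symm
      _ ≤ ∑ m ∈ s, ‖a m‖ ^ 2 * (2 * T + 8 * Z) := by
          refine Finset.sum_le_sum fun m _ => mul_le_mul_of_nonneg_left ?_ (by positivity)
          refine StrichartzAux.row_sum hα hT s m (fun q => B (q, m))
            (fun q => hBT _) (fun q hq => ?_)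
          have hcomm : ((m.natAbs : ℤ) - q.natAbs).natAbs = ((q.natAbs : ℤ) - m.natAbs).natAbs := by
            omega
          rw [hcomm]
          exact hBd q m hq
      _ = (2 * T + 8 * Z) * S := by rw [← Finset.sum_mul, mul_comm]
  calc ∫ t in Set.Ioc (0:ℝ) T,
        ‖∑ᶠ n : ℤ, a n * Complex.exp (Complex.I * ((t * |(n:ℝ)| ^ α + n * x : ℝ) : ℂ))‖ ^ 2
      = ∫ t in Set.Ioc (0:ℝ) T,
          ((∑ n ∈ s, a n * E n t) * (starRingEnd ℂ) (∑ n ∈ s, a n * E n t)).re := by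
        simp only [h1, hnormsq]
    _ = ((∫ t in Set.Ioc (0:ℝ) T,
          (∑ n ∈ s, a n * E n t) * (starRingEnd ℂ) (∑ n ∈ s, a n * E n t))).re := by
        simpa using integral_re hFint
    _ ≤ ‖∫ t in Set.Ioc (0:ℝ) T,
          (∑ n ∈ s, a n * E n t) * (starRingEnd ℂ) (∑ n ∈ s, a n * E n t)‖ := by
        exact Complex.re_le_norm _
    _ = ‖∑ p ∈ s ×ˢ s, (a p.1 * (starRingEnd ℂ) (a p.2) *
            Complex.exp (Complex.I * ((((p.1 : ℝ) - (p.2 : ℝ)) * x : ℝ) : ℂ)))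
          * ∫ t in Set.Ioc (0:ℝ) T,
              Complex.exp (Complex.I * ((t * (w p.1 - w p.2) : ℝ) : ℂ))‖ := by
        congr 1
        simp_rw [hprod]
        rw [MeasureTheory.integral_finset_sum (μ := volume.restrict (Set.Ioc (0:ℝ) T)) _
          (fun (p : ℤ × ℤ) _ =>
          Continuous.integrableOn_Ioc (f := fun t => (a p.1 * (starRingEnd ℂ) (a p.2) *
            Complex.exp (Complex.I * ((((p.1 : ℝ) - (p.2 : ℝ)) * x : ℝ) : ℂ)))
            * Complex.exp (Complex.I * ((t * (w p.1 - w p.2) : ℝ) : ℂ)))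
            (continuous_const.mul (hexpc _)))]
        exact Finset.sum_congr rfl fun p _ => MeasureTheory.integral_const_mul _ _
    _ ≤ ∑ p ∈ s ×ˢ s, ‖a p.1‖ * ‖a p.2‖ * B p := by
        refine (norm_sum_le _ _).trans (Finset.sum_le_sum fun p _ => ?_)
        rw [norm_mul, norm_mul, norm_mul, StrichartzAux.norm_exp_I_real, RCLike.norm_conj]
        simp only [hB, mul_one]
        exact le_refl _
    _ ≤ ∑ p ∈ s ×ˢ s, (‖a p.1‖ ^ 2 + ‖a p.2‖ ^ 2) / 2 * B p := by
        refine Finset.sum_le_sum fun p _ => mul_le_mul_of_nonneg_right ?_ (hB0 p)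
        nlinarith [sq_nonneg (‖a p.1‖ - ‖a p.2‖)]
    _ = (1/2) * (∑ p ∈ s ×ˢ s, ‖a p.1‖ ^ 2 * B p)
        + (1/2) * (∑ p ∈ s ×ˢ s, ‖a p.2‖ ^ 2 * B p) := by
        rw [Finset.mul_sum, Finset.mul_sum, ← Finset.sum_add_distrib]
        exact Finset.sum_congr rfl fun p _ => by ring
    _ ≤ (1/2) * ((2 * T + 8 * Z) * S) + (1/2) * ((2 * T + 8 * Z) * S) := by
        have := bound1; have := bound2
        gcongr
    _ = (2 * T + 8 * Z) * S := by ring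
end
end

section
/- Let f ∈ L¹(𝕋). The constant function 1 belongs to the closure, in the L¹(𝕋) topology, of the linear span of the set of translates { τ_{x₀} f : x₀ ∈ 𝕋 } if and only if ∫_𝕋 f(x) dx ≠ 0. -/
open MeasureTheory Real AddCircle
open scoped ENNReal Convolution

noncomputable section

instance : Fact ((0:ℝ) < 2 * π) := ⟨by positivity⟩

namespace OneSpanAux

variable {α : Type*} [MeasurableSpace α] {μ : Measure α}

/-- The set integral over `s` as a linear map on `L¹`. -/
def setIntLM (μ : Measure α) (s : Set α) : Lp ℂ 1 μ →ₗ[ℂ] ℂ where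
  toFun h := ∫ x in s, h x ∂μ
  map_add' h g := by
    have h1 : ∀ᵐ x ∂μ.restrict s, (⇑(h + g)) x = h x + g x :=
      ae_restrict_of_ae (Lp.coeFn_add h g)
    show ∫ x in s, (⇑(h + g)) x ∂μ = (∫ x in s, h x ∂μ) + ∫ x in s, g x ∂μ
    rw [integral_congr_ae h1,
      integral_add ((L1.integrable_coeFn h).restrict) ((L1.integrable_coeFn g).restrict)]
  map_smul' c h := by
    have h1 : ∀ᵐ x ∂μ.restrict s, (⇑(c • h)) x = c • h x :=
      ae_restrict_of_ae (Lp.coeFn_smul c h)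
    show ∫ x in s, (⇑(c • h)) x ∂μ = c • ∫ x in s, h x ∂μ
    rw [integral_congr_ae h1, integral_smul]

/-- The set integral over `s` as a continuous linear map on `L¹`. -/
def setIntCLM (μ : Measure α) (s : Set α) : Lp ℂ 1 μ →L[ℂ] ℂ :=
  (setIntLM μ s).mkContinuous 1 (fun h => by
    simp only [setIntLM, LinearMap.coe_mk, AddHom.coe_mk, one_mul]
    calc ‖∫ x in s, h x ∂μ‖ ≤ ∫ x in s, ‖h x‖ ∂μ := norm_integral_le_integral_norm _
    _ ≤ ∫ x, ‖h x‖ ∂μ :=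
        integral_mono_measure Measure.restrict_le_self
          (Filter.Eventually.of_forall fun _ => norm_nonneg _) (L1.integrable_coeFn h).norm
    _ = ‖h‖ := (L1.norm_eq_integral_norm h).symm)

theorem setIntCLM_apply (s : Set α) (h : Lp ℂ 1 μ) :
    setIntCLM μ s h = ∫ x in s, h x ∂μ := rfl

theorem coeFn_finsetSum {ι : Type*} (s : Finset ι) (h : ι → Lp ℂ 1 μ) :
    ⇑(∑ i ∈ s, h i) =ᵐ[μ] fun x => ∑ i ∈ s, h i x := by
  classical
  induction s using Finset.induction_on with
  | empty =>
    simp only [Finset.sum_empty]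
    exact Lp.coeFn_zero ℂ 1 μ
  | insert i t hni ih =>
    filter_upwards [Lp.coeFn_add (h i) (∑ j ∈ t, h j), ih] with x hx1 hx2
    simp only [Finset.sum_insert hni, hx1, Pi.add_apply, hx2]

end OneSpanAux

open OneSpanAux

/-- For `f ∈ L¹(𝕋)`, the constant function `1` belongs to the `L¹` closure of
the linear span of the translates of `f` if and only if `∫ f ≠ 0`. -/
theorem one_mem_L1_closure_span_translates_iff
    (f : AddCircle (2 * π) → ℂ) (hf : Integrable f haarAddCircle) :
    (∀ ε : ℝ, 0 < ε →
      ∃ (s : Finset (AddCircle (2 * π))) (c : AddCircle (2 * π) → ℂ),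
        eLpNorm (fun x => (1 : ℂ) - ∑ x₀ ∈ s, c x₀ * f (x - x₀)) 1 haarAddCircle
          < ENNReal.ofReal ε)
    ↔ (∫ x, f x ∂haarAddCircle) ≠ 0 := by
  set μ : Measure (AddCircle (2 * π)) := haarAddCircle with hμ
  set I : ℂ := ∫ x, f x ∂μ with hI
  have hint_tr : ∀ x₀ : AddCircle (2 * π), Integrable (fun x => f (x - x₀)) μ :=
    fun x₀ => hf.comp_sub_right x₀
  constructor
  · -- forward: approximation ⇒ integral nonzero
    intro happrox hI0
    obtain ⟨s, c, hlt⟩ := happrox 1 one_pos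
    set g : AddCircle (2 * π) → ℂ := fun x => ∑ x₀ ∈ s, c x₀ * f (x - x₀) with hg
    have hgint : Integrable g μ :=
      integrable_finset_sum s fun i _ => (hint_tr i).const_mul (c i)
    have hhint : Integrable (fun x => (1:ℂ) - g x) μ := (integrable_const 1).sub hgint
    have hintg : ∫ x, g x ∂μ = 0 := by
      rw [hg, integral_finset_sum s fun i _ => (hint_tr i).const_mul (c i)]
      refine Finset.sum_eq_zero fun i _ => ?_
      rw [integral_const_mul, integral_sub_right_eq_self f i, ← hI, hI0, mul_zero]
    have hih : ∫ x, ((1:ℂ) - g x) ∂μ = 1 := by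
      rw [integral_sub (integrable_const 1) hgint, hintg, sub_zero, integral_const]
      simp [hμ]
    have h1le : (1:ℝ) ≤ ∫ x, ‖(1:ℂ) - g x‖ ∂μ := by
      have := norm_integral_le_integral_norm (μ := μ) (f := fun x => (1:ℂ) - g x)
      rwa [hih, norm_one] at this
    have hlt' : ∫ x, ‖(1:ℂ) - g x‖ ∂μ < 1 := by
      have h2 : ENNReal.ofReal (∫ x, ‖(1:ℂ) - g x‖ ∂μ) < ENNReal.ofReal 1 := by
        rw [ofReal_integral_norm_eq_lintegral_enorm hhint, ← eLpNorm_one_eq_lintegral_enorm]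
        exact hlt
      exact (ENNReal.ofReal_lt_ofReal_iff one_pos).mp h2
    linarith
  · -- reverse: integral nonzero ⇒ approximation
    intro hInz ε hε
    have hfm : MemLp f 1 μ := memLp_one_iff_integrable.mpr hf
    have hmp : ∀ x₀ : AddCircle (2 * π), MeasurePreserving (fun x : AddCircle (2 * π) => x - x₀) μ μ :=
      fun x₀ => measurePreserving_sub_right μ x₀
    set φ : C(AddCircle (2 * π) × AddCircle (2 * π), AddCircle (2 * π)) := ⟨fun p => p.2 - p.1, by fun_prop⟩ with hφ
    have hmp' : ∀ x₀ : AddCircle (2 * π), MeasurePreserving (ContinuousMap.curry φ x₀) μ μ := fun x₀ => hmp x₀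
    set F : AddCircle (2 * π) → Lp ℂ 1 μ :=
      fun x₀ => Lp.compMeasurePreserving (ContinuousMap.curry φ x₀) (hmp' x₀) (hfm.toLp f)
      with hF
    have hFcoe : ∀ x₀ : AddCircle (2 * π), ⇑(F x₀) =ᵐ[μ] fun x => f (x - x₀) := by
      intro x₀
      refine (Lp.coeFn_compMeasurePreserving _ _).trans ?_
      exact (hmp x₀).quasiMeasurePreserving.ae_eq_comp hfm.coeFn_toLp
    have hFcont : Continuous F :=
      continuous_const.compMeasurePreservingLp (ContinuousMap.curry φ).continuous hmp'
        (by norm_num)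
    have hFint : Integrable F μ := by
      refine hFcont.integrable_of_hasCompactSupport ?_
      exact IsCompact.of_isClosed_subset isCompact_univ (isClosed_tsupport _) (Set.subset_univ _)
    set p := (Submodule.span ℂ (Set.range F)).topologicalClosure with hp
    have hGmem : (∫ x₀, F x₀ ∂μ) ∈ p := by
      have hconv : Convex ℝ (p : Set (Lp ℂ 1 μ)) := by
        have := (p.restrictScalars ℝ).convex
        simpa using this
      refine hconv.integral_mem ?_ ?_ hFint
      · rw [hp, Submodule.topologicalClosure_coe]
        exact isClosed_closure
      · refine Filter.Eventually.of_forall fun x₀ => ?_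
        exact (Submodule.span ℂ (Set.range F)).le_topologicalClosure
          (Submodule.subset_span (Set.mem_range_self x₀))
    set oneL : Lp ℂ 1 μ := (memLp_const (1:ℂ)).toLp (fun _ => (1:ℂ)) with honeL
    have hone_coe : ⇑oneL =ᵐ[μ] fun _ => (1:ℂ) := MemLp.coeFn_toLp _
    -- the Bochner integral of the translates equals `I • 1`
    have hGI : (∫ x₀, F x₀ ∂μ) = I • oneL := by
      apply Lp.ext (p := (1:ℝ≥0∞))
      apply Lp.ae_eq_of_forall_setIntegral_eq _ _ one_ne_zero ENNReal.one_ne_top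
        (fun s _ _ => (L1.integrable_coeFn _).integrableOn)
        (fun s _ _ => (L1.integrable_coeFn _).integrableOn)
      intro s hs hμs
      have hL1 : ∫ x in s, (∫ x₀, F x₀ ∂μ) x ∂μ = ∫ x₀, ∫ x in s, f (x - x₀) ∂μ ∂μ := by
        rw [← setIntCLM_apply s, ← ContinuousLinearMap.integral_comp_comm _ hFint]
        refine integral_congr_ae (Filter.Eventually.of_forall fun x₀ => ?_)
        show setIntCLM μ s (F x₀) = _
        rw [setIntCLM_apply]
        exact integral_congr_ae (ae_restrict_of_ae (hFcoe x₀))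
      set gind : AddCircle (2 * π) → ℂ := s.indicator (fun _ => (1:ℂ)) with hgind
      have hgint : Integrable gind μ := (integrable_const (1:ℂ)).indicator hs
      have hfneg : Integrable (fun x : AddCircle (2 * π) => f (-x)) μ := hf.comp_neg
      have hconv : ∀ x₀ : AddCircle (2 * π), ∫ x in s, f (x - x₀) ∂μ
          = (gind ⋆[ContinuousLinearMap.mul ℂ ℂ, μ] (fun x => f (-x))) x₀ := by
        intro x₀
        rw [MeasureTheory.convolution_def, ← integral_indicator hs]
        refine integral_congr_ae (Filter.Eventually.of_forall fun t => ?_)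
        by_cases ht : t ∈ s <;>
          simp [hgind, Set.indicator_apply, ht, neg_sub]
      have hLconv : ∫ x₀, (gind ⋆[ContinuousLinearMap.mul ℂ ℂ, μ] (fun x : AddCircle (2 * π) => f (-x))) x₀ ∂μ
          = (∫ x, gind x ∂μ) * (∫ x : AddCircle (2 * π), f (-x) ∂μ) := by
        simpa using integral_convolution (ContinuousLinearMap.mul ℂ ℂ) hgint hfneg
      have hgint_val : ∫ x, gind x ∂μ = ((μ s).toReal : ℂ) := by
        rw [hgind, integral_indicator_const (1:ℂ) hs]
        simp
        rfl
      have hfneg_val : ∫ x : AddCircle (2 * π), f (-x) ∂μ = I := by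
        rw [hI]
        exact integral_neg_eq_self f μ
      calc ∫ x in s, (∫ x₀, F x₀ ∂μ) x ∂μ
          = ∫ x₀, ∫ x in s, f (x - x₀) ∂μ ∂μ := hL1
        _ = ∫ x₀, (gind ⋆[ContinuousLinearMap.mul ℂ ℂ, μ] (fun x : AddCircle (2 * π) => f (-x))) x₀ ∂μ := by
            exact integral_congr_ae (Filter.Eventually.of_forall fun x₀ => hconv x₀)
        _ = ((μ s).toReal : ℂ) * I := by rw [hLconv, hgint_val, hfneg_val]
        _ = ∫ x in s, (I • oneL) x ∂μ := by
            have : ∀ᵐ x ∂μ.restrict s, (I • oneL) x = I := by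
              apply ae_restrict_of_ae
              filter_upwards [Lp.coeFn_smul I oneL, hone_coe] with x h1 h2
              rw [h1]; simp [h2]
            rw [integral_congr_ae this, setIntegral_const]
            rw [Complex.real_smul, mul_comm]
            exact mul_comm _ _
    have honemem : oneL ∈ p := by
      have h1 : oneL = I⁻¹ • (∫ x₀, F x₀ ∂μ) := by
        rw [hGI, smul_smul, inv_mul_cancel₀ hInz, one_smul]
      rw [h1]
      exact p.smul_mem _ hGmem
    -- extract a finite linear combination within ε
    have hcl : oneL ∈ closure ((Submodule.span ℂ (Set.range F) : Submodule ℂ (Lp ℂ 1 μ)) :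
        Set (Lp ℂ 1 μ)) := by
      rw [← Submodule.topologicalClosure_coe]
      exact honemem
    obtain ⟨b, hbS, hbdist⟩ := Metric.mem_closure_iff.mp hcl ε hε
    obtain ⟨d, hd⟩ := Finsupp.mem_span_range_iff_exists_finsupp.mp hbS
    refine ⟨d.support, ⇑d, ?_⟩
    have hbsum : b = ∑ i ∈ d.support, d i • F i := by
      rw [← hd]; rfl
    have hcoe : (fun x => (1:ℂ) - ∑ x₀ ∈ d.support, d x₀ * f (x - x₀)) =ᵐ[μ] ⇑(oneL - b) := by
      have hterm : ∀ᵐ x ∂μ, ∀ i ∈ d.support, (d i • F i) x = d i * f (x - i) := by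
        rw [Filter.eventually_all_finset]
        intro i _
        filter_upwards [Lp.coeFn_smul (d i) (F i), hFcoe i] with x h1 h2
        rw [h1]
        simp [h2]
      filter_upwards [Lp.coeFn_sub oneL b, hone_coe,
        hbsum ▸ coeFn_finsetSum d.support (fun i => d i • F i), hterm] with x h1 h2 h3 h4
      rw [h1]
      simp only [Pi.sub_apply, h2, h3]
      congr 1
      exact (Finset.sum_congr rfl fun i hi => h4 i hi).symm
    rw [eLpNorm_congr_ae hcoe]
    have hnorm : eLpNorm (⇑(oneL - b)) 1 μ = ENNReal.ofReal ‖oneL - b‖ := by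
      rw [Lp.norm_def, ENNReal.ofReal_toReal (Lp.eLpNorm_ne_top _)]
    rw [hnorm, ENNReal.ofReal_lt_ofReal_iff hε, ← dist_eq_norm]
    exact hbdist
end
end

section
/- Let f ∈ L²(𝕋) with ∫_𝕋 f(x) dx ≠ 0. Then the constant function 1 belongs to the closure, in the L²(𝕋) topology, of the linear span of the set of translates { τ_{x₀} f : x₀ ∈ 𝕋 }. -/
/-!
If `g ∈ L²` is orthogonal to every translate `τ_y f`, then integrating
`0 = ⟪τ_y f, g⟫ = ∫ conj (f (x - y)) g x dx` over `y` and using Fubini together with the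
invariance of Haar measure gives `conj (∫ f) * ∫ g = 0`, hence `⟪g, 1⟫ = conj (∫ g) = 0`.
So `1` lies in the double orthogonal complement of the span of the translates, which is its
closure.
-/

open MeasureTheory Real AddCircle

noncomputable section

open scoped ComplexConjugate InnerProductSpace

theorem Submodule.exists_norm_sub_finsuppSum_lt_of_mem_topologicalClosure_span
    {R E ι : Type*} [Semiring R] [SeminormedAddCommGroup E] [Module R E]
    [ContinuousConstSMul R E] {v : ι → E} {x : E}
    (hx : x ∈ (Submodule.span R (Set.range v)).topologicalClosure) {ε : ℝ} (hε : 0 < ε) :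
    ∃ c : ι →₀ R, ‖x - c.sum fun i a => a • v i‖ < ε := by
  obtain ⟨y, hy, hxy⟩ := Metric.mem_closure_iff.mp hx ε hε
  obtain ⟨c, rfl⟩ := Finsupp.mem_span_range_iff_exists_finsupp.mp hy
  exact ⟨c, by rwa [← dist_eq_norm]⟩

namespace MeasureTheory

section Translate

variable {G : Type*} [MeasurableSpace G] [AddGroup G] [MeasurableAdd G] (μ : Measure G)
  [μ.IsAddRightInvariant] {E : Type*} [NormedAddCommGroup E] {p : ENNReal}

def Lp.translate (y : G) : Lp E p μ →+ Lp E p μ :=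
  Lp.compMeasurePreserving (· - y) (measurePreserving_sub_right μ y)

theorem Lp.coeFn_translate (y : G) (F : Lp E p μ) :
    Lp.translate μ y F =ᵐ[μ] fun x => F (x - y) :=
  Lp.coeFn_compMeasurePreserving F _

theorem Lp.translate_toLp_ae_eq (y : G) {f : G → E} (hf : MemLp f p μ) :
    Lp.translate μ y (hf.toLp f) =ᵐ[μ] fun x => f (x - y) :=
  (Lp.coeFn_translate μ y _).trans <|
    (measurePreserving_sub_right μ y).quasiMeasurePreserving.ae_eq_comp hf.coeFn_toLp

theorem L2.inner_translate {𝕜 : Type*} [RCLike 𝕜] (y : G) (F g : Lp 𝕜 2 μ) :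
    ⟪Lp.translate μ y F, g⟫_𝕜 = ∫ x, conj (F (x - y)) * g x ∂μ := by
  rw [L2.inner_def]
  refine integral_congr_ae ?_
  filter_upwards [Lp.coeFn_translate μ y F] with x hx
  rw [hx, RCLike.inner_apply, mul_comm]

end Translate

section HaarIntegral

variable {G : Type*} [MeasurableSpace G] [AddGroup G] [MeasurableAdd₂ G] {μ : Measure G}
  [μ.IsAddLeftInvariant] [μ.IsAddRightInvariant] {𝕜 : Type*} [RCLike 𝕜]

theorem integral_integral_comp_sub_mul [SFinite μ] {u v : G → 𝕜} (hu : Integrable u μ)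
    (hv : Integrable v μ) :
    ∫ y, ∫ x, u (x - y) * v x ∂μ ∂μ = (∫ x, u x ∂μ) * ∫ x, v x ∂μ := by
  have hshift : ∀ y, ∫ x, u (x - y) * v x ∂μ = ∫ x, u x * v (x + y) ∂μ := fun y => by
    simpa using (integral_add_right_eq_self (fun x => u (x - y) * v x) y (μ := μ)).symm
  have hint : Integrable (fun z : G × G => u z.1 * v (z.1 + z.2)) (μ.prod μ) :=
    (measurePreserving_prod_add μ μ).integrable_comp_of_integrable (hu.mul_prod hv)
  simp_rw [hshift]
  rw [← integral_integral_swap hint]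
  simp_rw [integral_const_mul, integral_add_left_eq_self, integral_mul_const]

variable [IsFiniteMeasure μ]

theorem L2.integral_eq_zero_of_forall_inner_translate_eq_zero {F g : Lp 𝕜 2 μ}
    (hF : ∫ x, F x ∂μ ≠ 0) (hg : ∀ y, ⟪Lp.translate μ y F, g⟫_𝕜 = 0) : ∫ x, g x ∂μ = 0 := by
  have hprod := integral_integral_comp_sub_mul (u := fun x => conj (F x))
    ((Lp.memLp F).star.integrable one_le_two) ((Lp.memLp g).integrable one_le_two)
  simp only [← L2.inner_translate, hg, integral_zero, integral_conj] at hprod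
  exact (mul_eq_zero.mp hprod.symm).resolve_left (by simpa using hF)

theorem L2.const_one_mem_topologicalClosure_span_translate {F : Lp 𝕜 2 μ}
    (hF : ∫ x, F x ∂μ ≠ 0) :
    Lp.const 2 μ (1 : 𝕜) ∈
      (Submodule.span 𝕜 (Set.range fun y => Lp.translate μ y F)).topologicalClosure := by
  rw [← Submodule.orthogonal_orthogonal_eq_closure, Submodule.mem_orthogonal]
  intro g hg
  rw [inner_eq_zero_symm, ← indicatorConstLp_univ, L2.inner_indicatorConstLp_one,
    setIntegral_univ]
  exact L2.integral_eq_zero_of_forall_inner_translate_eq_zero hF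
    fun y => hg _ (Submodule.subset_span ⟨y, rfl⟩)

theorem MemLp.exists_eLpNorm_one_sub_sum_translate_lt {f : G → 𝕜} (hf : MemLp f 2 μ)
    (hf0 : ∫ x, f x ∂μ ≠ 0) {ε : ℝ} (hε : 0 < ε) :
    ∃ (s : Finset G) (c : G → 𝕜),
      eLpNorm (fun x => (1 : 𝕜) - ∑ x₀ ∈ s, c x₀ * f (x - x₀)) 2 μ < ENNReal.ofReal ε := by
  set F := hf.toLp f
  have hF : ∫ x, F x ∂μ ≠ 0 := by rwa [integral_congr_ae hf.coeFn_toLp]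
  obtain ⟨c, hc⟩ := Submodule.exists_norm_sub_finsuppSum_lt_of_mem_topologicalClosure_span
    (L2.const_one_mem_topologicalClosure_span_translate hF) hε
  refine ⟨c.support, c, ?_⟩
  set S := ∑ y ∈ c.support, c y • Lp.translate μ y F
  have hterm : ∀ y, ⇑(c y • Lp.translate μ y F) =ᵐ[μ] fun x => c y * f (x - y) :=
    fun y => (Lp.coeFn_smul _ _).trans <| (Lp.translate_toLp_ae_eq μ y hf).const_smul (c y)
  have hS : S =ᵐ[μ] fun x => ∑ y ∈ c.support, c y * f (x - y) := by
    filter_upwards [Lp.coeFn_fun_finsetSum c.support fun y => c y • Lp.translate μ y F,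
      (Filter.eventually_all_finset c.support).mpr fun y _ => hterm y] with x hsum hterms
    exact hsum.trans (Finset.sum_congr rfl hterms)
  have hae : (fun x => (1 : 𝕜) - ∑ x₀ ∈ c.support, c x₀ * f (x - x₀)) =ᵐ[μ]
      ⇑(Lp.const 2 μ (1 : 𝕜) - S : Lp 𝕜 2 μ) := by
    filter_upwards [Lp.coeFn_sub (Lp.const 2 μ (1 : 𝕜)) S, Lp.coeFn_const 2 μ (1 : 𝕜), hS]
      with x hsub hone hsum
    rw [hsub, Pi.sub_apply, hone, hsum, Function.const_apply]
  rw [eLpNorm_congr_ae hae, ← Lp.enorm_def, ← ofReal_norm]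
  exact (ENNReal.ofReal_lt_ofReal_iff hε).mpr hc

end HaarIntegral

end MeasureTheory

/-- For `f ∈ L²(𝕋)` with `∫ f ≠ 0`, the constant function `1` belongs to the
`L²` closure of the linear span of the translates of `f`. -/
theorem one_mem_L2_closure_span_translates
    (f : AddCircle (2 * π) → ℂ) (hf : MemLp f 2 haarAddCircle)
    (hf0 : (∫ x, f x ∂haarAddCircle) ≠ 0) :
    ∀ ε : ℝ, 0 < ε →
      ∃ (s : Finset (AddCircle (2 * π))) (c : AddCircle (2 * π) → ℂ),
        eLpNorm (fun x => (1 : ℂ) - ∑ x₀ ∈ s, c x₀ * f (x - x₀)) 2 haarAddCircle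
          < ENNReal.ofReal ε :=
  fun _ hε => hf.exists_eLpNorm_one_sub_sum_translate_lt hf0 hε
end
end

section
/- Let α > 1 be a real number. For all real numbers x, y ∈ ℝ one has | |x|^α − |y|^α | ≥ 2^{1−α} ( |x| + |y| )^{α−1} · | |x| − |y| |. -/
open Real

noncomputable section

lemma aux_lower_bound (α : ℝ) (hα : 1 < α) (a b : ℝ) (hb : 0 ≤ b) (hba : b ≤ a) :
    (2 : ℝ) ^ (1 - α) * (a + b) ^ (α - 1) * (a - b) ≤ a ^ α - b ^ α := by
  have ha : 0 ≤ a := hb.trans hba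
  have hα1 : (0:ℝ) ≤ α - 1 := by linarith
  -- rewrite 2^(1-α)*(a+b)^(α-1) = ((a+b)/2)^(α-1)
  have h1 : (2 : ℝ) ^ (1 - α) * (a + b) ^ (α - 1) = ((a + b) / 2) ^ (α - 1) := by
    rw [Real.div_rpow (by linarith) (by norm_num), div_eq_mul_inv,
      ← Real.rpow_neg (by norm_num), neg_sub]
    ring
  rw [h1]
  have h2 : ((a + b) / 2) ^ (α - 1) ≤ a ^ (α - 1) :=
    Real.rpow_le_rpow (by linarith) (by linarith) hα1
  rcases eq_or_lt_of_le ha with h | hapos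
  · have hb0 : b = 0 := le_antisymm (hba.trans h.symm.le) hb
    simp [← h, hb0, Real.zero_rpow (by linarith : α ≠ 0)]
  · have key : a ^ (α - 1) * (a - b) ≤ a ^ α - b ^ α := by
      have haα : a ^ (α - 1) * a = a ^ α := by
        rw [← Real.rpow_add_one (ne_of_gt hapos)]; ring_nf
      have hbα : b ^ α ≤ a ^ (α - 1) * b := by
        rcases eq_or_lt_of_le hb with h' | hbpos
        · simp [← h', Real.zero_rpow (by linarith : α ≠ 0)]
        · have : b ^ α = b ^ (α - 1) * b := by
            rw [← Real.rpow_add_one (ne_of_gt hbpos)]; ring_nf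
          rw [this]
          exact mul_le_mul_of_nonneg_right
            (Real.rpow_le_rpow hb hba hα1) hb
      nlinarith [Real.rpow_nonneg ha (α - 1)]
    calc ((a + b) / 2) ^ (α - 1) * (a - b) ≤ a ^ (α - 1) * (a - b) :=
          mul_le_mul_of_nonneg_right h2 (by linarith)
      _ ≤ a ^ α - b ^ α := key

/-- Elementary lower bound on the resonance function: for `α > 1` and all real
`x, y`, one has `||x|^α − |y|^α| ≥ 2^{1−α} (|x|+|y|)^{α−1} ||x|−|y||`. -/
theorem abs_rpow_sub_abs_rpow_lower_bound
    (α : ℝ) (hα : 1 < α) (x y : ℝ) :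
    (2 : ℝ) ^ (1 - α) * (|x| + |y|) ^ (α - 1) * |(|x| - |y|)|
      ≤ |(|x| ^ α - |y| ^ α)| := by
  rcases le_total |y| |x| with h | h
  · have hmono : |y| ^ α ≤ |x| ^ α :=
      Real.rpow_le_rpow (abs_nonneg y) h (by linarith)
    rw [abs_of_nonneg (by linarith : (0:ℝ) ≤ |x| - |y|),
      abs_of_nonneg (by linarith : (0:ℝ) ≤ |x| ^ α - |y| ^ α)]
    exact aux_lower_bound α hα _ _ (abs_nonneg y) h
  · have hmono : |x| ^ α ≤ |y| ^ α :=
      Real.rpow_le_rpow (abs_nonneg x) h (by linarith)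
    rw [abs_sub_comm (|x|) (|y|), abs_sub_comm (|x| ^ α),
      abs_of_nonneg (by linarith : (0:ℝ) ≤ |y| - |x|),
      abs_of_nonneg (by linarith : (0:ℝ) ≤ |y| ^ α - |x| ^ α),
      add_comm (|x|)]
    exact aux_lower_bound α hα _ _ (abs_nonneg x) h
end
end

section
/- Let α > 1 be a real number. There exists a constant C_α > 0 such that for all integers n₁, n₂ ∈ ℤ with |n₁| ≠ |n₂| one has ⟨ |n₁|^α − |n₂|^α ⟩² ≥ C_α · ⟨n₁⟩^{α−1} · ⟨n₂⟩^{α−1} · ⟨ |n₁| − |n₂| ⟩². -/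
open Real

noncomputable section

/-- The Japanese bracket `⟨x⟩ = (1 + x²)^{1/2}`. -/
def jb (x : ℝ) : ℝ := (1 + x ^ 2) ^ ((1:ℝ)/2)

lemma jb_sq (x : ℝ) : jb x ^ 2 = 1 + x ^ 2 := by
  have h : (0:ℝ) ≤ 1 + x ^ 2 := by positivity
  rw [jb, ← Real.rpow_natCast ((1 + x ^ 2) ^ ((1:ℝ)/2)) 2, ← Real.rpow_mul h]
  norm_num

lemma jb_abs (x : ℝ) : jb |x| = jb x := by simp [jb, sq_abs]

lemma jb_neg (x : ℝ) : jb (-x) = jb x := by simp [jb, neg_sq]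

lemma aux_main (α : ℝ) (hα : 1 < α) (a b : ℝ) (hb : 0 ≤ b) (hab : b + 1 ≤ a) :
    (2:ℝ) ^ (-α) * (jb a ^ (α - 1) * jb b ^ (α - 1) * jb (a - b) ^ 2)
      ≤ jb (a ^ α - b ^ α) ^ 2 := by
  set m : ℝ := max b 1 with hm
  set d : ℝ := a - b with hd
  have ha1 : 1 ≤ a := by linarith
  have ha0 : 0 < a := by linarith
  have hd1 : 1 ≤ d := by simp [hd]; linarith
  have hd0 : 0 < d := by linarith
  have hm1 : 1 ≤ m := le_max_right _ _
  have hm0 : 0 < m := by linarith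
  have hma : m ≤ a := max_le (by linarith) ha1
  have he : 0 ≤ α - 1 := by linarith
  -- key1 : a^(α-1) * d ≤ a^α - b^α
  have haa : a ^ (α - 1) * a = a ^ α := by
    rw [← Real.rpow_add_one ha0.ne' (α - 1)]; ring_nf
  have hba : b ^ α ≤ a ^ (α - 1) * b := by
    rcases eq_or_lt_of_le hb with h | h
    · simp [← h, Real.zero_rpow (show α ≠ 0 by linarith)]
    · have hbb : b ^ α = b ^ (α - 1) * b := by
        rw [← Real.rpow_add_one h.ne' (α - 1)]; ring_nf
      rw [hbb]
      have : b ^ (α - 1) ≤ a ^ (α - 1) := Real.rpow_le_rpow hb (by linarith) he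
      nlinarith
  have key1 : a ^ (α - 1) * d ≤ a ^ α - b ^ α := by
    have h : a ^ (α - 1) * d = a ^ (α - 1) * a - a ^ (α - 1) * b := by rw [hd]; ring
    rw [h, haa]; linarith
  have hmA : m ^ (α - 1) ≤ a ^ (α - 1) := Real.rpow_le_rpow (by linarith) hma he
  have key2 : m ^ (α - 1) * d ≤ a ^ α - b ^ α := by
    calc m ^ (α - 1) * d ≤ a ^ (α - 1) * d := by
          exact mul_le_mul_of_nonneg_right hmA hd0.le
      _ ≤ a ^ α - b ^ α := key1
  have hD0 : 0 < a ^ α - b ^ α := by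
    have h1 : 0 < a ^ (α - 1) * d := by positivity
    linarith
  have keysq : a ^ (α - 1) * m ^ (α - 1) * d ^ 2 ≤ (a ^ α - b ^ α) ^ 2 := by
    have : a ^ (α - 1) * m ^ (α - 1) * d ^ 2 = (a ^ (α - 1) * d) * (m ^ (α - 1) * d) := by
      ring
    rw [this, sq]
    exact mul_le_mul key1 key2 (by positivity) hD0.le
  -- bracket bounds
  have hsq : ∀ x : ℝ, jb x ^ (α - 1) = (1 + x ^ 2) ^ ((1/2) * (α - 1) : ℝ) := by
    intro x
    rw [jb, ← Real.rpow_mul (by positivity)]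
  have hx2 : ∀ x : ℝ, 0 < x → (x ^ 2 : ℝ) ^ ((1/2) * (α - 1) : ℝ) = x ^ (α - 1) := by
    intro x hx
    rw [← Real.rpow_natCast x 2, ← Real.rpow_mul hx.le]
    congr 1; push_cast; ring
  have hA : jb a ^ (α - 1) ≤ (2:ℝ) ^ ((1/2) * (α - 1) : ℝ) * a ^ (α - 1) := by
    rw [hsq a]
    have h1 : (1 + a ^ 2 : ℝ) ≤ 2 * a ^ 2 := by nlinarith
    calc (1 + a ^ 2 : ℝ) ^ ((1/2) * (α - 1) : ℝ)
        ≤ (2 * a ^ 2) ^ ((1/2) * (α - 1) : ℝ) :=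
          Real.rpow_le_rpow (by positivity) h1 (by positivity)
      _ = (2:ℝ) ^ ((1/2) * (α - 1) : ℝ) * (a ^ 2 : ℝ) ^ ((1/2) * (α - 1) : ℝ) :=
          Real.mul_rpow (by norm_num) (by positivity)
      _ = (2:ℝ) ^ ((1/2) * (α - 1) : ℝ) * a ^ (α - 1) := by rw [hx2 a ha0]
  have hB : jb b ^ (α - 1) ≤ (2:ℝ) ^ ((1/2) * (α - 1) : ℝ) * m ^ (α - 1) := by
    rw [hsq b]
    have h1 : (1 + b ^ 2 : ℝ) ≤ 2 * m ^ 2 := by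
      have hbm : b ≤ m := le_max_left _ _
      nlinarith
    calc (1 + b ^ 2 : ℝ) ^ ((1/2) * (α - 1) : ℝ)
        ≤ (2 * m ^ 2) ^ ((1/2) * (α - 1) : ℝ) :=
          Real.rpow_le_rpow (by positivity) h1 (by positivity)
      _ = (2:ℝ) ^ ((1/2) * (α - 1) : ℝ) * (m ^ 2 : ℝ) ^ ((1/2) * (α - 1) : ℝ) :=
          Real.mul_rpow (by norm_num) (by positivity)
      _ = (2:ℝ) ^ ((1/2) * (α - 1) : ℝ) * m ^ (α - 1) := by rw [hx2 m hm0]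
  have hC : jb d ^ 2 ≤ 2 * d ^ 2 := by
    rw [jb_sq]; nlinarith
  -- combine
  have hpow2 : (2:ℝ) ^ (-α) * ((2:ℝ) ^ ((1/2) * (α - 1) : ℝ) * (2:ℝ) ^ ((1/2) * (α - 1) : ℝ) * 2) = 1 := by
    have h : (2:ℝ) ^ (-α) * ((2:ℝ) ^ ((1/2) * (α - 1) : ℝ) * (2:ℝ) ^ ((1/2) * (α - 1) : ℝ) * 2)
        = (2:ℝ) ^ (-α + (1/2) * (α - 1) + (1/2) * (α - 1) + 1 : ℝ) := by
      rw [Real.rpow_add two_pos, Real.rpow_add two_pos, Real.rpow_add two_pos, Real.rpow_one]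
      ring
    rw [h, show (-α + (1/2) * (α - 1) + (1/2) * (α - 1) + 1 : ℝ) = 0 by ring, Real.rpow_zero]
  have hLHS : (2:ℝ) ^ (-α) * (jb a ^ (α - 1) * jb b ^ (α - 1) * jb (a - b) ^ 2)
      ≤ a ^ (α - 1) * m ^ (α - 1) * d ^ 2 := by
    have hstep : jb a ^ (α - 1) * jb b ^ (α - 1) * jb (a - b) ^ 2
        ≤ ((2:ℝ) ^ ((1/2) * (α - 1) : ℝ) * a ^ (α - 1))
          * ((2:ℝ) ^ ((1/2) * (α - 1) : ℝ) * m ^ (α - 1)) * (2 * d ^ 2) := by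
      have h1 : (0:ℝ) ≤ jb a ^ (α - 1) := by
        have := Real.rpow_nonneg (show (0:ℝ) ≤ (1 + a^2) ^ ((1:ℝ)/2) by positivity) (α - 1)
        simpa [jb] using this
      have h2 : (0:ℝ) ≤ jb b ^ (α - 1) := by
        have := Real.rpow_nonneg (show (0:ℝ) ≤ (1 + b^2) ^ ((1:ℝ)/2) by positivity) (α - 1)
        simpa [jb] using this
      have h3 : (0:ℝ) ≤ jb (a - b) ^ 2 := by positivity
      have hd' : jb (a - b) ^ 2 ≤ 2 * d ^ 2 := by rw [hd] at hC; exact hC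
      gcongr
    calc (2:ℝ) ^ (-α) * (jb a ^ (α - 1) * jb b ^ (α - 1) * jb (a - b) ^ 2)
        ≤ (2:ℝ) ^ (-α) * (((2:ℝ) ^ ((1/2) * (α - 1) : ℝ) * a ^ (α - 1))
          * ((2:ℝ) ^ ((1/2) * (α - 1) : ℝ) * m ^ (α - 1)) * (2 * d ^ 2)) := by
          apply mul_le_mul_of_nonneg_left hstep (by positivity)
      _ = ((2:ℝ) ^ (-α) * ((2:ℝ) ^ ((1/2) * (α - 1) : ℝ) * (2:ℝ) ^ ((1/2) * (α - 1) : ℝ) * 2))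
            * (a ^ (α - 1) * m ^ (α - 1) * d ^ 2) := by ring
      _ = a ^ (α - 1) * m ^ (α - 1) * d ^ 2 := by rw [hpow2]; ring
  calc (2:ℝ) ^ (-α) * (jb a ^ (α - 1) * jb b ^ (α - 1) * jb (a - b) ^ 2)
      ≤ a ^ (α - 1) * m ^ (α - 1) * d ^ 2 := hLHS
    _ ≤ (a ^ α - b ^ α) ^ 2 := keysq
    _ ≤ 1 + (a ^ α - b ^ α) ^ 2 := by linarith
    _ = jb (a ^ α - b ^ α) ^ 2 := (jb_sq _).symm

/-- Quantitative lower bound on the resonance function `|n₁|^α − |n₂|^α`: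
`⟨|n₁|^α − |n₂|^α⟩² ≳ ⟨n₁⟩^{α−1} ⟨n₂⟩^{α−1} ⟨|n₁|−|n₂|⟩²` when `|n₁| ≠ |n₂|`. -/
theorem resonance_bracket_lower_bound (α : ℝ) (hα : 1 < α) :
    ∃ C : ℝ, 0 < C ∧
      ∀ n₁ n₂ : ℤ, |n₁| ≠ |n₂| →
        C * (jb (n₁ : ℝ) ^ (α - 1) * jb (n₂ : ℝ) ^ (α - 1)
              * jb (|(n₁ : ℝ)| - |(n₂ : ℝ)|) ^ 2)
          ≤ jb (|(n₁ : ℝ)| ^ α - |(n₂ : ℝ)| ^ α) ^ 2 := by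
  refine ⟨(2:ℝ) ^ (-α), Real.rpow_pos_of_pos two_pos _, ?_⟩
  intro n₁ n₂ hne
  rcases lt_or_gt_of_ne hne with h | h
  · -- |n₁| < |n₂|
    have hba : |(n₁ : ℝ)| + 1 ≤ |(n₂ : ℝ)| := by
      have h' : |n₁| + 1 ≤ |n₂| := Int.lt_iff_add_one_le.mp h
      have := (Int.cast_le (R := ℝ)).mpr h'
      push_cast at this
      exact this
    have key := aux_main α hα |(n₂ : ℝ)| |(n₁ : ℝ)| (abs_nonneg _) hba
    rw [jb_abs, jb_abs] at key
    have e1 : jb (|(n₂ : ℝ)| - |(n₁ : ℝ)|) = jb (|(n₁ : ℝ)| - |(n₂ : ℝ)|) := by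
      rw [← jb_neg (|(n₁ : ℝ)| - |(n₂ : ℝ)|)]; ring_nf
    have e2 : jb (|(n₂ : ℝ)| ^ α - |(n₁ : ℝ)| ^ α) = jb (|(n₁ : ℝ)| ^ α - |(n₂ : ℝ)| ^ α) := by
      rw [← jb_neg (|(n₁ : ℝ)| ^ α - |(n₂ : ℝ)| ^ α)]; ring_nf
    rw [e1, e2] at key
    calc (2:ℝ) ^ (-α) * (jb (n₁ : ℝ) ^ (α - 1) * jb (n₂ : ℝ) ^ (α - 1)
              * jb (|(n₁ : ℝ)| - |(n₂ : ℝ)|) ^ 2)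
        = (2:ℝ) ^ (-α) * (jb (n₂ : ℝ) ^ (α - 1) * jb (n₁ : ℝ) ^ (α - 1)
              * jb (|(n₁ : ℝ)| - |(n₂ : ℝ)|) ^ 2) := by ring
      _ ≤ jb (|(n₁ : ℝ)| ^ α - |(n₂ : ℝ)| ^ α) ^ 2 := key
  · -- |n₂| < |n₁|
    have hba : |(n₂ : ℝ)| + 1 ≤ |(n₁ : ℝ)| := by
      have h' : |n₂| + 1 ≤ |n₁| := Int.lt_iff_add_one_le.mp h
      have := (Int.cast_le (R := ℝ)).mpr h'
      push_cast at this
      exact this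
    have key := aux_main α hα |(n₁ : ℝ)| |(n₂ : ℝ)| (abs_nonneg _) hba
    rw [jb_abs, jb_abs] at key
    exact key
end
end

section
/- Let α > 1 be a real number. There exists a constant C_α > 0 such that for every square-summable family (c_n)_{n∈ℤ} of complex numbers, Σ_{(n₁,n₂) ∈ ℤ², |n₁| ≠ |n₂|} ( |c_{n₁}| · |c_{n₂}| ) / | |n₁|^α − |n₂|^α | ≤ C_α Σ_{n∈ℤ} |c_n|². -/
/-!
Since `t ↦ t ^ α` is superadditive on `[0, ∞)` for `α ≥ 1`, `||n|^α − |m|^α| ≥ ||n| − |m||^α`,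
so every row of the kernel `1 / ||n|^α − |m|^α|` sums to at most `2 Σ_l |l|^(-α)`, which is
finite for `α > 1`. The kernel is symmetric, so `2 |c_n| |c_m| ≤ |c_n|² + |c_m|²` (Schur's test)
bounds the bilinear sum by this row bound times `Σ |c_n|²`. Working in `ℝ≥0∞` makes all
rearrangements of the double series free of summability side conditions.
-/

open scoped ENNReal

noncomputable section

lemma abs_sub_rpow_le_abs_rpow_sub {x y p : ℝ} (hx : 0 ≤ x) (hy : 0 ≤ y) (hp : 1 ≤ p) :
    |x - y| ^ p ≤ |x ^ p - y ^ p| := by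
  wlog hyx : y ≤ x generalizing x y
  · rw [abs_sub_comm, abs_sub_comm (x ^ p)]
    exact this hy hx (le_of_not_ge hyx)
  have hsuper : (x - y) ^ p + y ^ p ≤ x ^ p := by
    simpa using Real.add_rpow_le_rpow_add (sub_nonneg.2 hyx) hy hp
  rw [abs_of_nonneg (sub_nonneg.2 hyx)]
  exact (le_sub_iff_add_le.2 hsuper).trans (le_abs_self _)

namespace ENNReal

lemma two_mul_le_add_sq (a b : ℝ≥0∞) : 2 * a * b ≤ a ^ 2 + b ^ 2 := by
  rcases eq_or_ne a ∞ with rfl | ha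
  · simp
  rcases eq_or_ne b ∞ with rfl | hb
  · simp
  lift a to NNReal using ha
  lift b to NNReal using hb
  exact_mod_cast _root_.two_mul_le_add_sq a b

lemma tsum_comp_abs_sub_le (f : ℤ → ℝ≥0∞) (k : ℤ) :
    ∑' n : ℤ, f (|n| - k) ≤ 2 * ∑' l : ℤ, f l := by
  have hinj : Function.Injective fun n : ℤ => (|n| - k, decide (0 ≤ n)) := by
    intro a b hab
    simp only [Prod.mk.injEq, sub_left_inj, decide_eq_decide] at hab
    rcases abs_eq_abs.1 hab.1 with h | h <;> omega
  calc ∑' n : ℤ, f (|n| - k) ≤ ∑' q : ℤ × Bool, f q.1 :=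
        ENNReal.tsum_comp_le_tsum_of_injective hinj (fun q => f q.1)
    _ = 2 * ∑' l : ℤ, f l := by
        rw [ENNReal.tsum_prod', ← ENNReal.tsum_mul_left]
        simp [two_mul]

/-- Schur's test for a symmetric kernel on `ℝ≥0∞`. -/
theorem tsum_mul_mul_kernel_le_of_symm {ι : Type*} (K : ι → ι → ℝ≥0∞)
    (hsymm : ∀ i j, K i j = K j i) {M : ℝ≥0∞} (hrow : ∀ i, ∑' j, K i j ≤ M) (a : ι → ℝ≥0∞) :
    ∑' p : ι × ι, a p.1 * a p.2 * K p.1 p.2 ≤ M * ∑' i, a i ^ 2 := by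
  have hdiag : ∑' p : ι × ι, a p.1 ^ 2 * K p.1 p.2 ≤ M * ∑' i, a i ^ 2 :=
    calc ∑' p : ι × ι, a p.1 ^ 2 * K p.1 p.2 = ∑' i, a i ^ 2 * ∑' j, K i j := by
          rw [ENNReal.tsum_prod']
          simp only [ENNReal.tsum_mul_left]
      _ ≤ ∑' i, a i ^ 2 * M := by gcongr with i; exact hrow i
      _ = M * ∑' i, a i ^ 2 := by rw [ENNReal.tsum_mul_right, mul_comm]
  have hswap : ∑' p : ι × ι, a p.2 ^ 2 * K p.1 p.2 = ∑' p : ι × ι, a p.1 ^ 2 * K p.1 p.2 := by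
    rw [← (Equiv.prodComm ι ι).tsum_eq]
    simp [hsymm]
  refine (ENNReal.mul_le_mul_iff_right two_ne_zero ofNat_ne_top).1 ?_
  calc 2 * ∑' p : ι × ι, a p.1 * a p.2 * K p.1 p.2
        = ∑' p : ι × ι, 2 * a p.1 * a p.2 * K p.1 p.2 := by
          rw [← ENNReal.tsum_mul_left]
          simp only [mul_assoc]
    _ ≤ ∑' p : ι × ι, (a p.1 ^ 2 + a p.2 ^ 2) * K p.1 p.2 := by
          gcongr with p
          exact two_mul_le_add_sq _ _
    _ = 2 * ∑' p : ι × ι, a p.1 ^ 2 * K p.1 p.2 := by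
          simp only [add_mul, ENNReal.tsum_add, hswap, two_mul]
    _ ≤ 2 * (M * ∑' i, a i ^ 2) := by gcongr

end ENNReal

def nonresonantKernel (α : ℝ) (n m : ℤ) : ℝ≥0∞ :=
  if |n| ≠ |m| then ENNReal.ofReal (1 / |(|(n : ℝ)| ^ α - |(m : ℝ)| ^ α)|) else 0

lemma nonresonantKernel_comm (α : ℝ) (n m : ℤ) :
    nonresonantKernel α n m = nonresonantKernel α m n := by
  simp only [nonresonantKernel, ne_comm (a := |n|), abs_sub_comm]

lemma nonresonantKernel_le {α : ℝ} (hα : 1 ≤ α) (n m : ℤ) :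
    nonresonantKernel α n m ≤ ENNReal.ofReal (|((|m| - |n| : ℤ) : ℝ)| ^ (-α)) := by
  unfold nonresonantKernel
  split_ifs with h
  · have hgap : 0 < |(|(m : ℝ)| - |(n : ℝ)|)| := by
      rw [abs_pos, sub_ne_zero, ← Int.cast_abs, ← Int.cast_abs]
      exact_mod_cast Ne.symm h
    refine ENNReal.ofReal_le_ofReal ?_
    push_cast
    rw [Real.rpow_neg hgap.le, ← one_div, abs_sub_comm (|(n : ℝ)| ^ α)]
    exact one_div_le_one_div_of_le (Real.rpow_pos_of_pos hgap α)
      (abs_sub_rpow_le_abs_rpow_sub (abs_nonneg _) (abs_nonneg _) hα)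
  · exact zero_le

lemma tsum_nonresonantKernel_le {α : ℝ} (hα : 1 ≤ α) (n : ℤ) :
    ∑' m : ℤ, nonresonantKernel α n m ≤ 2 * ∑' l : ℤ, ENNReal.ofReal (|(l : ℝ)| ^ (-α)) :=
  (ENNReal.tsum_le_tsum fun m => nonresonantKernel_le hα n m).trans
    (ENNReal.tsum_comp_abs_sub_le (fun l : ℤ => ENNReal.ofReal (|(l : ℝ)| ^ (-α))) |n|)

/-- Non-resonant sum bound behind the `L^∞_x L²_t` Strichartz estimate:
`Σ_{|n₁| ≠ |n₂|} |c_{n₁}||c_{n₂}| / ||n₁|^α − |n₂|^α| ≤ C Σ |c_n|²`. -/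
theorem nonresonant_sum_bound (α : ℝ) (hα : 1 < α) :
    ∃ C : ℝ, 0 < C ∧
      ∀ c : ℤ → ℂ, Summable (fun n => ‖c n‖ ^ 2) →
        ∑' p : ℤ × ℤ,
            (if |p.1| ≠ |p.2| then
              ENNReal.ofReal
                (‖c p.1‖ * ‖c p.2‖ / |(|(p.1 : ℝ)| ^ α - |(p.2 : ℝ)| ^ α)|)
            else 0)
          ≤ ENNReal.ofReal C * ∑' n : ℤ, ENNReal.ofReal (‖c n‖ ^ 2) := by
  have hZ : Summable fun l : ℤ => |(l : ℝ)| ^ (-α) := Real.summable_abs_int_rpow hα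
  have hZnonneg : ∀ l : ℤ, 0 ≤ |(l : ℝ)| ^ (-α) := fun l => by positivity
  have hZpos : 0 < ∑' l : ℤ, |(l : ℝ)| ^ (-α) := hZ.tsum_pos hZnonneg 1 (by norm_num)
  refine ⟨2 * ∑' l : ℤ, |(l : ℝ)| ^ (-α), by positivity, fun c _ => ?_⟩
  have hrow (n : ℤ) :
      ∑' m : ℤ, nonresonantKernel α n m ≤ ENNReal.ofReal (2 * ∑' l : ℤ, |(l : ℝ)| ^ (-α)) := by
    rw [ENNReal.ofReal_mul zero_le_two, ENNReal.ofReal_ofNat,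
      ENNReal.ofReal_tsum_of_nonneg hZnonneg hZ]
    exact tsum_nonresonantKernel_le hα.le n
  calc _ = ∑' p : ℤ × ℤ, ENNReal.ofReal ‖c p.1‖ * ENNReal.ofReal ‖c p.2‖ *
          nonresonantKernel α p.1 p.2 := by
        refine tsum_congr fun p => ?_
        unfold nonresonantKernel
        split_ifs
        · rw [div_eq_mul_one_div, ENNReal.ofReal_mul (by positivity),
            ENNReal.ofReal_mul (norm_nonneg _)]
        · rw [mul_zero]
    _ ≤ _ := ENNReal.tsum_mul_mul_kernel_le_of_symm _ (nonresonantKernel_comm α) hrow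
          fun n => ENNReal.ofReal ‖c n‖
    _ = _ := by simp only [ENNReal.ofReal_pow (norm_nonneg _)]
end
end

section
/- Let s > 0 and λ ≥ 0 be real numbers with λ + s > 1/2. There exists a constant C = C(λ, s) > 0 such that for every family (Γ_n)_{n∈ℤ} of nonnegative real numbers and every n₁ ∈ ℤ, Σ_{n₂ ∈ ℤ, |n₂| ≠ |n₁|} Γ_{n₁ − n₂} / ⟨ |n₁| − |n₂| ⟩^s ≤ C ( Σ_{n∈ℤ} ⟨n⟩^{2λ} Γ_n² )^{1/2}. -/
open Real MeasureTheory

noncomputable section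

lemma jb_pos (x : ℝ) : 0 < jb x := Real.rpow_pos_of_pos (by positivity) _

lemma jb_le_jb {a b : ℝ} (h : |a| ≤ |b|) : jb a ≤ jb b := by
  have h2 : a ^ 2 ≤ b ^ 2 := by
    have := abs_nonneg a
    nlinarith [sq_abs a, sq_abs b]
  exact Real.rpow_le_rpow (by positivity) (by linarith) (by norm_num)

lemma jb_rpow (x r : ℝ) : jb x ^ r = (1 + x ^ 2) ^ (r / 2) := by
  rw [jb, ← Real.rpow_mul (by positivity)]
  congr 1; ring

lemma sq_rpow {x : ℝ} (hx : 0 < x) (p : ℝ) : (x ^ p) ^ 2 = x ^ (2 * p) := by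
  rw [← Real.rpow_natCast (x ^ p) 2, ← Real.rpow_mul hx.le]
  norm_num [mul_comm]

/-- Schur-type kernel bound: for `s > 0`, `λ ≥ 0` with `λ + s > 1/2`, the sum
`Σ_{|n₂| ≠ |n₁|} Γ_{n₁−n₂} / ⟨|n₁|−|n₂|⟩^s` is bounded by
`C (Σ ⟨n⟩^{2λ} Γ_n²)^{1/2}`, uniformly in `n₁`. -/
theorem schur_kernel_bound (s lam : ℝ) (hs : 0 < s) (hlam : 0 ≤ lam)
    (hls : 1 / 2 < lam + s) :
    ∃ C : ℝ, 0 < C ∧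
      ∀ Γ : ℤ → ℝ, (∀ n, 0 ≤ Γ n) →
      ∀ n₁ : ℤ,
        ∑' n₂ : ℤ,
            (if |n₂| ≠ |n₁| then
              ENNReal.ofReal (Γ (n₁ - n₂) / jb (|(n₁ : ℝ)| - |(n₂ : ℝ)|) ^ s)
            else 0)
          ≤ ENNReal.ofReal C *
            (∑' n : ℤ, ENNReal.ofReal (jb (n : ℝ) ^ (2 * lam) * Γ n ^ 2))
              ^ ((1:ℝ)/2) := by
  set t := lam + s with htdef
  have hts : 0 < t := by simp only [htdef]; linarith
  set f : ℕ → ENNReal := fun m => if m = 0 then 0 else ENNReal.ofReal ((1 + (m:ℝ)^2) ^ (-t))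
    with hf
  have hK : (∑' m, f m) ≠ ⊤ := by
    have hsum : Summable (fun m : ℕ => (m:ℝ) ^ (-(2*t))) :=
      Real.summable_nat_rpow.mpr (by linarith)
    have hle : ∀ m : ℕ, f m ≤ ENNReal.ofReal ((m:ℝ) ^ (-(2*t))) := by
      intro m
      rcases Nat.eq_zero_or_pos m with rfl | hm
      · simp [hf]
      · have hm1 : (1:ℝ) ≤ m := by exact_mod_cast hm
        simp only [hf, if_neg hm.ne']
        apply ENNReal.ofReal_le_ofReal
        have h2 : ((m:ℝ)) ^ (-(2*t)) = ((m:ℝ)^2) ^ (-t) := by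
          rw [← Real.rpow_natCast (m:ℝ) 2, ← Real.rpow_mul (by positivity)]
          norm_num
        rw [h2]
        exact Real.rpow_le_rpow_of_nonpos (by positivity) (by nlinarith) (by linarith)
    refine ne_top_of_le_ne_top ?_ (ENNReal.tsum_le_tsum hle)
    rw [← ENNReal.ofReal_tsum_of_nonneg (fun m => Real.rpow_nonneg (Nat.cast_nonneg m) _) hsum]
    exact ENNReal.ofReal_ne_top
  have hK4 : (∑' p : ℕ × Bool × Bool, f p.1) ≠ ⊤ := by
    rw [ENNReal.tsum_prod']
    have h4 : ∀ m : ℕ, (∑' _b : Bool × Bool, f m) = 4 * f m := by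
      intro m
      rw [tsum_fintype, Finset.sum_const, Finset.card_univ]
      norm_num [nsmul_eq_mul]
    simp only [h4]
    rw [ENNReal.tsum_mul_left]
    exact ENNReal.mul_ne_top (by norm_num) hK
  set Ken : ENNReal := (∑' p : ℕ × Bool × Bool, f p.1) ^ ((1:ℝ)/2) with hKen
  have hKenTop : Ken ≠ ⊤ := ENNReal.rpow_ne_top_of_nonneg (by norm_num) hK4
  refine ⟨Ken.toReal + 1, by positivity, ?_⟩
  intro Γ hΓ n₁
  set ψ : ℤ → ℕ × Bool × Bool :=
    fun n₂ => ((|n₁| - |n₂|).natAbs, decide (0 ≤ n₂), decide (|n₁| ≤ |n₂|)) with hψ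
  have hinj : Function.Injective ψ := by
    intro a b hab
    simp only [hψ, Prod.mk.injEq, decide_eq_decide] at hab
    obtain ⟨h1, h2, h3⟩ := hab
    simp only [Int.abs_eq_natAbs] at h1 h3
    omega
  set g : ℤ → ENNReal :=
    fun n₂ => ENNReal.ofReal (jb ((n₁:ℝ) - (n₂:ℝ)) ^ lam * Γ (n₁ - n₂)) with hg
  set h : ℤ → ENNReal := fun n₂ => if |n₂| ≠ |n₁| then
      ENNReal.ofReal ((jb ((n₁:ℝ) - (n₂:ℝ)) ^ lam)⁻¹ * (jb (|(n₁:ℝ)| - |(n₂:ℝ)|) ^ s)⁻¹)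
    else 0 with hh
  have hstep1 : ∀ n₂ : ℤ,
      (if |n₂| ≠ |n₁| then
        ENNReal.ofReal (Γ (n₁ - n₂) / jb (|(n₁ : ℝ)| - |(n₂ : ℝ)|) ^ s) else 0)
      ≤ g n₂ * h n₂ := by
    intro n₂
    by_cases hc : |n₂| ≠ |n₁|
    · simp only [hg, hh, if_pos hc]
      rw [← ENNReal.ofReal_mul (mul_nonneg (Real.rpow_nonneg (jb_pos _).le _) (hΓ _))]
      apply ENNReal.ofReal_le_ofReal
      have hne : jb ((n₁:ℝ) - (n₂:ℝ)) ^ lam ≠ 0 :=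
        (Real.rpow_pos_of_pos (jb_pos _) _).ne'
      rw [div_eq_mul_inv, mul_mul_mul_comm, mul_inv_cancel₀ hne, one_mul]
    · simp [hh, hc]
  have hpq : Real.HolderConjugate 2 2 := Real.HolderConjugate.two_two
  have hCS := ENNReal.lintegral_mul_le_Lp_mul_Lq (Measure.count : Measure ℤ) hpq
      (measurable_of_countable g).aemeasurable (measurable_of_countable h).aemeasurable
  simp only [Pi.mul_apply] at hCS
  rw [lintegral_count, lintegral_count, lintegral_count] at hCS
  have hgsum : (∑' n₂ : ℤ, g n₂ ^ (2:ℝ))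
      = ∑' n : ℤ, ENNReal.ofReal (jb (n:ℝ) ^ (2*lam) * Γ n ^ 2) := by
    have h1 : ∀ n₂ : ℤ, g n₂ ^ (2:ℝ)
        = ENNReal.ofReal (jb (((n₁ - n₂ : ℤ)):ℝ) ^ (2*lam) * Γ (n₁ - n₂) ^ 2) := by
      intro n₂
      have hcast : (((n₁ - n₂ : ℤ)):ℝ) = (n₁:ℝ) - (n₂:ℝ) := by push_cast; ring
      rw [hcast, hg]
      rw [ENNReal.rpow_two,
        ← ENNReal.ofReal_pow (mul_nonneg (Real.rpow_nonneg (jb_pos _).le _) (hΓ _)), mul_pow,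
        sq_rpow (jb_pos _)]
    simp only [h1]
    exact (Equiv.subLeft n₁).tsum_eq
      (fun n : ℤ => ENNReal.ofReal (jb (n:ℝ) ^ (2*lam) * Γ n ^ 2))
  have hhsum : (∑' n₂ : ℤ, h n₂ ^ (2:ℝ)) ≤ ∑' p : ℕ × Bool × Bool, f p.1 := by
    have h1 : ∀ n₂ : ℤ, h n₂ ^ (2:ℝ) ≤ f ((ψ n₂).1) := by
      intro n₂
      by_cases hc : |n₂| ≠ |n₁|
      · have hm0 : (|n₁| - |n₂|).natAbs ≠ 0 := by
          simp only [Int.abs_eq_natAbs] at hc ⊢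
          omega
        have hDcast : |(n₁:ℝ)| - |(n₂:ℝ)| = (((|n₁| - |n₂| : ℤ)):ℝ) := by
          push_cast; ring
        have hmD : (((|n₁| - |n₂|).natAbs : ℝ))^2 = (|(n₁:ℝ)| - |(n₂:ℝ)|)^2 := by
          rw [hDcast, Nat.cast_natAbs]
          push_cast
          rw [sq_abs]
        have habs : |(|(n₁:ℝ)| - |(n₂:ℝ)|)| ≤ |(n₁:ℝ) - (n₂:ℝ)| :=
          abs_abs_sub_abs_le_abs_sub _ _
        have hjb : jb (|(n₁:ℝ)| - |(n₂:ℝ)|) ≤ jb ((n₁:ℝ) - (n₂:ℝ)) := jb_le_jb habs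
        simp only [hh, if_pos hc, hψ, hf, if_neg hm0]
        rw [ENNReal.rpow_two, ← ENNReal.ofReal_pow
          (mul_nonneg (inv_nonneg.mpr (Real.rpow_nonneg (jb_pos _).le _))
            (inv_nonneg.mpr (Real.rpow_nonneg (jb_pos _).le _)))]
        apply ENNReal.ofReal_le_ofReal
        set D : ℝ := |(n₁:ℝ)| - |(n₂:ℝ)|
        set d : ℝ := (n₁:ℝ) - (n₂:ℝ)
        calc ((jb d ^ lam)⁻¹ * (jb D ^ s)⁻¹)^2
            = jb d ^ (2*(-lam)) * jb D ^ (2*(-s)) := by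
              rw [← Real.rpow_neg (jb_pos d).le, ← Real.rpow_neg (jb_pos D).le, mul_pow,
                sq_rpow (jb_pos d), sq_rpow (jb_pos D)]
          _ ≤ jb D ^ (2*(-lam)) * jb D ^ (2*(-s)) := by
              apply mul_le_mul_of_nonneg_right _ (Real.rpow_nonneg (jb_pos D).le _)
              exact Real.rpow_le_rpow_of_nonpos (jb_pos D) hjb (by linarith)
          _ = jb D ^ (2*(-lam) + 2*(-s)) := (Real.rpow_add (jb_pos D) _ _).symm
          _ = (1 + D^2) ^ ((2*(-lam) + 2*(-s))/2) := jb_rpow D _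
          _ = (1 + (((|n₁| - |n₂|).natAbs : ℝ))^2) ^ (-t) := by
              rw [hmD]
              congr 1
              simp only [htdef]; ring
      · simp only [hh, if_neg hc]
        simp [ENNReal.rpow_two]
    calc (∑' n₂ : ℤ, h n₂ ^ (2:ℝ)) ≤ ∑' n₂ : ℤ, f ((ψ n₂).1) := ENNReal.tsum_le_tsum h1
      _ ≤ _ := ENNReal.tsum_comp_le_tsum_of_injective hinj (fun p => f p.1)
  have hKenle : Ken ≤ ENNReal.ofReal (Ken.toReal + 1) := by
    conv_lhs => rw [← ENNReal.ofReal_toReal hKenTop]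
    exact ENNReal.ofReal_le_ofReal (by linarith)
  calc ∑' n₂ : ℤ,
        (if |n₂| ≠ |n₁| then
          ENNReal.ofReal (Γ (n₁ - n₂) / jb (|(n₁ : ℝ)| - |(n₂ : ℝ)|) ^ s) else 0)
      ≤ ∑' n₂ : ℤ, g n₂ * h n₂ := ENNReal.tsum_le_tsum hstep1
    _ ≤ (∑' n₂ : ℤ, g n₂ ^ (2:ℝ)) ^ ((1:ℝ)/2) * (∑' n₂ : ℤ, h n₂ ^ (2:ℝ)) ^ ((1:ℝ)/2) := hCS
    _ ≤ (∑' n : ℤ, ENNReal.ofReal (jb (n:ℝ) ^ (2*lam) * Γ n ^ 2)) ^ ((1:ℝ)/2) * Ken := by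
        rw [hgsum, hKen]
        exact mul_le_mul_right (ENNReal.rpow_le_rpow hhsum (by norm_num)) _
    _ ≤ ENNReal.ofReal (Ken.toReal + 1) *
        (∑' n : ℤ, ENNReal.ofReal (jb (n:ℝ) ^ (2*lam) * Γ n ^ 2)) ^ ((1:ℝ)/2) := by
        rw [mul_comm]
        exact mul_le_mul_left hKenle _
end
end
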